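/- arXiv:0910.5207 — 2 statements merged into one kernel-verified Lean document; each statement's English description precedes it below -/
import Mathlib

section
/- Let k and n be natural numbers and let the k-dimensional torus T^k (the direct product of k copies of the circle group S¹ = {z ∈ ℂ : |z| = 1}) act on the unit sphere Sⁿ = {v ∈ ℝ^{n+1} : ‖v‖ = 1} by a continuous action (the action map T^k × Sⁿ → Sⁿ is continuous). If the action is faithful (only the identity element acts as the identity map) and transitive (every point can be moved to every other point), then k = 1 and n = 1. -/
noncomputable abbrev Eu (n : ℕ) : Type := EuclideanSpace ℝ (Fin (n+1))

section
open Complex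

lemma unit_mem_slitPlane {u : ℂ} (habs : ‖u‖ = 1) (hne : u ≠ -1) :
    u ∈ Complex.slitPlane := by
  rw [Complex.mem_slitPlane_iff]
  by_contra h
  push_neg at h
  obtain ⟨h1, h2⟩ := h
  have hu : u = (u.re : ℂ) := by
    apply Complex.ext <;> simp [h2]
  have : |u.re| = 1 := by
    have := habs
    rw [hu] at this
    simpa using this
  rcases abs_eq (by norm_num : (0:ℝ) ≤ 1) |>.1 this with h | h
  · linarith
  · exact hne (by rw [hu, h]; norm_num)

lemma lift_step {X : Type*} [TopologicalSpace X] {f g : X → Circle} (hf : Continuous f)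
    (hg : Continuous g) (hclose : ∀ x, dist (f x) (g x) < 2)
    {G : X → ℝ} (hG : Continuous G) (hlift : ∀ x, Circle.exp (G x) = g x) :
    ∃ F : X → ℝ, Continuous F ∧ ∀ x, Circle.exp (F x) = f x := by
  have habs : ∀ x, ‖(f x : ℂ) / (g x : ℂ)‖ = 1 := by
    intro x; rw [norm_div, Circle.norm_coe, Circle.norm_coe, div_one]
  have hne : ∀ x, ((f x : ℂ) / (g x : ℂ)) ≠ -1 := by
    intro x h
    have : (f x : ℂ) = -(g x : ℂ) := by
      field_simp at h
      linear_combination h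
    have : dist (f x) (g x) = 2 := by
      have : dist ((f x : ℂ)) ((g x : ℂ)) = 2 := by
        rw [Complex.dist_eq, this]
        have : -(g x : ℂ) - g x = -(2 * g x) := by ring
        rw [this, norm_neg]
        simp [Circle.norm_coe]
      exact this
    linarith [hclose x]
  have hmem : ∀ x, ((f x : ℂ) / (g x : ℂ)) ∈ Complex.slitPlane :=
    fun x => unit_mem_slitPlane (habs x) (hne x)
  have hdiv : Continuous fun x => ((f x : ℂ) / (g x : ℂ)) :=
    (continuous_subtype_val.comp hf).div (continuous_subtype_val.comp hg)
      (fun x => Circle.coe_ne_zero _)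
  refine ⟨fun x => G x + Complex.arg ((f x : ℂ) / (g x : ℂ)), ?_, ?_⟩
  · refine hG.add (continuous_iff_continuousAt.2 fun x => ?_)
    exact ContinuousAt.comp (g := Complex.arg) (Complex.continuousAt_arg (hmem x))
      hdiv.continuousAt
  · intro x
    rw [Circle.exp_add, hlift x]
    apply Subtype.ext
    push_cast
    have h1 : (‖(f x : ℂ) / (g x : ℂ)‖ : ℂ) *
        Complex.exp (Complex.arg ((f x : ℂ) / (g x : ℂ)) * Complex.I) = (f x : ℂ) / (g x : ℂ) :=
      Complex.norm_mul_exp_arg_mul_I _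
    rw [habs x] at h1
    norm_num at h1
    rw [h1]
    field_simp

end

lemma lift_homotopy {X : Type*} [MetricSpace X] [CompactSpace X]
    (H : X → ℝ → Circle) (hH : Continuous fun p : X × ℝ => H p.1 p.2)
    {G : X → ℝ} (hG : Continuous G) (hlift : ∀ x, Circle.exp (G x) = H x 1) :
    ∃ F : X → ℝ, Continuous F ∧ ∀ x, Circle.exp (F x) = H x 0 := by
  -- uniform continuity on the compact set X × [0,1]
  have hK : IsCompact ((Set.univ : Set X) ×ˢ Set.Icc (0:ℝ) 1) :=
    isCompact_univ.prod isCompact_Icc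
  have huc : UniformContinuousOn (fun p : X × ℝ => H p.1 p.2)
      ((Set.univ : Set X) ×ˢ Set.Icc (0:ℝ) 1) :=
    hK.uniformContinuousOn_of_continuous hH.continuousOn
  replace huc := Metric.uniformContinuousOn_iff.1 huc
  obtain ⟨δ, hδ, hδ'⟩ := huc 1 one_pos
  obtain ⟨m, hm⟩ := exists_nat_gt (1/δ)
  have hm0 : 0 < (m : ℝ) := lt_of_le_of_lt (by positivity) hm
  have hstep : ∀ x : X, ∀ s t : ℝ, s ∈ Set.Icc (0:ℝ) 1 → t ∈ Set.Icc (0:ℝ) 1 →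
      |s - t| < δ → dist (H x s) (H x t) < 2 := by
    intro x s t hs ht hst
    have := hδ' (x, s) (by simp [hs]) (x, t) (by simp [ht]) (by
      rw [Prod.dist_eq]
      simp only [dist_self]
      rw [Real.dist_eq]
      exact max_lt hδ hst)
    linarith
  have key : ∀ j : ℕ, j ≤ m → ∃ F : X → ℝ, Continuous F ∧
      ∀ x, Circle.exp (F x) = H x ((m - j : ℕ) / m) := by
    intro j
    induction j with
    | zero => intro _; refine ⟨G, hG, fun x => ?_⟩
              rw [hlift x]; congr 1
              rw [Nat.sub_zero]; field_simp
    | succ j ih =>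
      intro hj
      obtain ⟨G', hG', hliftG'⟩ := ih (le_of_lt (Nat.lt_of_succ_le hj))
      have hmem : ∀ i : ℕ, i ≤ m → ((i : ℝ) / m) ∈ Set.Icc (0:ℝ) 1 := by
        intro i hi
        constructor
        · positivity
        · rw [div_le_one hm0]; exact_mod_cast hi
      refine lift_step (f := fun x => H x ((m - (j+1) : ℕ) / m))
        (g := fun x => H x ((m - j : ℕ) / m)) ?_ ?_ ?_ hG' hliftG'
      · exact hH.comp (continuous_id.prodMk continuous_const)
      · exact hH.comp (continuous_id.prodMk continuous_const)
      · intro x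
        apply hstep x _ _ (hmem _ (Nat.sub_le _ _)) (hmem _ (Nat.sub_le _ _))
        have h1 : ((m - j : ℕ) : ℝ) - ((m - (j+1) : ℕ) : ℝ) = 1 := by
          have h2 : j + 1 ≤ m := hj
          push_cast [Nat.cast_sub (le_of_lt (Nat.lt_of_succ_le hj)), Nat.cast_sub h2]
          ring
        have h2 : ((m - (j+1) : ℕ) : ℝ) - ((m - j : ℕ) : ℝ) = -1 := by linarith
        rw [div_sub_div_same, h2]
        rw [abs_div, abs_neg, abs_one, abs_of_pos hm0]
        rw [div_lt_iff₀ hm0]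
        have h3 := (div_lt_iff₀ hδ).1 hm
        nlinarith
  obtain ⟨F, hF, hF'⟩ := key m le_rfl
  refine ⟨F, hF, fun x => ?_⟩
  rw [hF']; congr 1; simp

lemma hemi_lift {n : ℕ}
    (f : Metric.sphere (0 : Eu n) 1 → Circle)
    (hf : Continuous f) (ε : ℝ) (hε : ε = 1 ∨ ε = -1) :
    ∃ F : Metric.sphere (0 : Eu n) 1 → ℝ,
      ContinuousOn F {x : Metric.sphere (0 : Eu n) 1 | 0 ≤ ε * ((x : Eu n) 0)} ∧
      ∀ x : Metric.sphere (0 : Eu n) 1,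
        0 ≤ ε * ((x : Eu n) 0) → Circle.exp (F x) = f x := by
  have hε2 : ε * ε = 1 := by rcases hε with h | h <;> rw [h] <;> norm_num
  have hεn : ‖ε‖ = 1 := by rcases hε with h | h <;> rw [h] <;> norm_num
  have hN₀norm : ‖(EuclideanSpace.single 0 ε : Eu n)‖ = 1 := by
    rw [EuclideanSpace.norm_single, hεn]
  have hN₀mem : (EuclideanSpace.single 0 ε : Eu n) ∈ Metric.sphere (0 : Eu n) 1 := by
    simpa using hN₀norm
  set D : Set (Metric.sphere (0 : Eu n) 1) :=
    {x : Metric.sphere (0 : Eu n) 1 | 0 ≤ ε * ((x : Eu n) 0)} with hD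
  haveI : CompactSpace D := by
    rw [← isCompact_iff_compactSpace]
    apply IsClosed.isCompact
    exact IsClosed.preimage
      (continuous_const.mul (((continuous_apply (0 : Fin (n+1))).comp (PiLp.continuous_ofLp 2 _)).comp
        continuous_subtype_val)) isClosed_Ici
  set proj : ℝ → ℝ := fun t => min 1 (max 0 t) with hproj
  have hprojc : Continuous proj := continuous_const.min (continuous_const.max continuous_id)
  have hproj0 : proj 0 = 0 := by simp [hproj]
  have hproj1 : proj 1 = 1 := by simp [hproj]
  have hprojmem : ∀ t, proj t ∈ Set.Icc (0:ℝ) 1 := fun t =>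
    ⟨le_min zero_le_one (le_max_left _ _), min_le_left _ _⟩
  set v : D → ℝ → Eu n := fun x t =>
    (1 - proj t) • ((x : Metric.sphere (0 : Eu n) 1) : Eu n)
      + proj t • (EuclideanSpace.single 0 ε : Eu n) with hv
  have hvc : Continuous fun p : D × ℝ => v p.1 p.2 := by
    apply Continuous.add
    · exact ((continuous_const.sub (hprojc.comp continuous_snd)).smul
        (continuous_subtype_val.comp (continuous_subtype_val.comp continuous_fst)))
    · exact ((hprojc.comp continuous_snd).smul continuous_const)
  have hxnorm : ∀ x : D, ‖((x : Metric.sphere (0 : Eu n) 1) : Eu n)‖ = 1 := by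
    intro x
    have := (x : Metric.sphere (0 : Eu n) 1).2
    simpa using this
  have hvne : ∀ (x : D) (t : ℝ), v x t ≠ 0 := by
    intro x t h
    rcases eq_or_lt_of_le (hprojmem t).1 with hp | hp
    · rw [hv] at h
      simp only [← hp, zero_smul, add_zero, sub_zero, one_smul] at h
      have hx1 := hxnorm x
      rw [h] at hx1
      simp at hx1
    · have h0 : v x t 0 = (1 - proj t) * (((x : Metric.sphere (0 : Eu n) 1) : Eu n) 0)
          + proj t * ε := by
        rw [hv]
        simp [PiLp.add_apply, PiLp.smul_apply, EuclideanSpace.single_apply, smul_eq_mul]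
      have hge : 0 ≤ ε * (((x : Metric.sphere (0 : Eu n) 1) : Eu n) 0) := x.2
      have hpos : 0 < ε * (v x t 0) := by
        rw [h0, mul_add]
        have he : ε * ((1 - proj t) * (((x : Metric.sphere (0 : Eu n) 1) : Eu n) 0))
            = (1 - proj t) * (ε * (((x : Metric.sphere (0 : Eu n) 1) : Eu n) 0)) := by ring
        rw [he]
        have h1 : 0 ≤ (1 - proj t) * (ε * (((x : Metric.sphere (0 : Eu n) 1) : Eu n) 0)) :=
          mul_nonneg (by linarith [(hprojmem t).2]) hge
        nlinarith
      rw [h] at hpos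
      have : (0 : Eu n) 0 = 0 := rfl
      rw [this] at hpos
      simp at hpos
  have hcmem : ∀ (x : D) (t : ℝ), ‖v x t‖⁻¹ • v x t ∈ Metric.sphere (0 : Eu n) 1 := by
    intro x t
    simp only [Metric.mem_sphere, dist_zero_right]
    exact norm_smul_inv_norm (hvne x t)
  set H : D → ℝ → Circle := fun x t => f ⟨‖v x t‖⁻¹ • v x t, hcmem x t⟩ with hHdef
  have hHc : Continuous fun p : D × ℝ => H p.1 p.2 := by
    apply hf.comp
    apply Continuous.subtype_mk
    exact ((hvc.norm.inv₀ (fun p => by simpa using hvne p.1 p.2)).smul hvc)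
  have hH1 : ∀ x : D, H x 1 = f ⟨EuclideanSpace.single 0 ε, hN₀mem⟩ := by
    intro x
    have hpt : (⟨‖v x 1‖⁻¹ • v x 1, hcmem x 1⟩ : Metric.sphere (0 : Eu n) 1)
        = ⟨EuclideanSpace.single 0 ε, hN₀mem⟩ := by
      apply Subtype.ext
      show ‖v x 1‖⁻¹ • v x 1 = _
      have hveq : v x 1 = EuclideanSpace.single 0 ε := by
        rw [hv]; simp only [hproj1, sub_self, zero_smul, zero_add, one_smul]
      rw [hveq, hN₀norm]
      norm_num
    show f ⟨‖v x 1‖⁻¹ • v x 1, hcmem x 1⟩ = _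
    exact congrArg f hpt
  have hH0 : ∀ x : D, H x 0 = f (x : Metric.sphere (0 : Eu n) 1) := by
    intro x
    have hpt : (⟨‖v x 0‖⁻¹ • v x 0, hcmem x 0⟩ : Metric.sphere (0 : Eu n) 1)
        = (x : Metric.sphere (0 : Eu n) 1) := by
      apply Subtype.ext
      show ‖v x 0‖⁻¹ • v x 0 = _
      have hveq : v x 0 = ((x : Metric.sphere (0 : Eu n) 1) : Eu n) := by
        rw [hv]; simp only [hproj0, sub_zero, one_smul, zero_smul, add_zero]
      rw [hveq, hxnorm x]
      norm_num
    show f ⟨‖v x 0‖⁻¹ • v x 0, hcmem x 0⟩ = _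
    exact congrArg f hpt
  obtain ⟨F₀, hF₀c, hF₀⟩ := lift_homotopy H hHc
    (G := fun _ => Complex.arg ((f ⟨EuclideanSpace.single 0 ε, hN₀mem⟩ : Circle) : ℂ))
    continuous_const (fun x => by rw [hH1 x]; exact Circle.exp_arg _)
  classical
  refine ⟨fun x => if h : 0 ≤ ε * ((x : Eu n) 0) then F₀ ⟨x, h⟩ else 0, ?_, ?_⟩
  · rw [continuousOn_iff_continuous_restrict]
    have hres : Set.domRestrict D
        (fun x => if h : 0 ≤ ε * ((x : Eu n) 0) then F₀ ⟨x, h⟩ else 0) =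
        fun y : D => F₀ ⟨y.1, y.2⟩ := by
      funext y
      simp only [Set.restrict_apply]
      exact dif_pos y.2
    rw [hres]
    exact hF₀c.comp (Continuous.subtype_mk continuous_subtype_val _)
  · intro x hx
    have h1 := hF₀ ⟨x, hx⟩
    rw [hH0] at h1
    simpa [dif_pos hx] using h1

lemma equator_preconnected {n : ℕ} (hn : 2 ≤ n) :
    IsPreconnected {x : Metric.sphere (0 : Eu n) 1 | ((x : Eu n) 0) = 0} := by
  -- the embedding of ℝⁿ into ℝ^{n+1} as last n coordinates
  set g : EuclideanSpace ℝ (Fin n) → Eu n := fun y => WithLp.toLp 2 (Fin.cons 0 y) with hg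
  have hgapp0 : ∀ y, g y 0 = 0 := fun y => rfl
  have hgapps : ∀ y (i : Fin n), g y i.succ = y i := fun y i => by
    rw [hg]; exact Fin.cons_succ (α := fun _ : Fin (n+1) => ℝ) (0:ℝ) (fun j => y j) i
  have hgnorm : ∀ y, ‖g y‖ = ‖y‖ := by
    intro y
    rw [EuclideanSpace.norm_eq, EuclideanSpace.norm_eq]
    congr 1
    rw [Fin.sum_univ_succ]
    simp only [hgapp0, hgapps, norm_zero]
    norm_num
  have hgc : Continuous g := by
    have : Continuous fun y : EuclideanSpace ℝ (Fin n) => (g y : Fin (n+1) → ℝ) := by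
      apply continuous_pi
      intro i
      refine Fin.cases ?_ ?_ i
      · simpa [hgapp0] using continuous_const
      · intro j
        simp only [hgapps]
        exact (continuous_apply j).comp (PiLp.continuous_ofLp 2 _)
    exact (PiLp.continuous_toLp 2 _).comp this
  -- the (n-1)-sphere is connected since n ≥ 2
  have hrank : 1 < Module.rank ℝ (EuclideanSpace ℝ (Fin n)) := by
    rw [← Module.finrank_eq_rank ℝ]
    have : Module.finrank ℝ (EuclideanSpace ℝ (Fin n)) = n := finrank_euclideanSpace_fin
    rw [this]
    exact_mod_cast lt_of_lt_of_le one_lt_two hn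
  have hconn : IsConnected (Metric.sphere (0 : EuclideanSpace ℝ (Fin n)) 1) :=
    isConnected_sphere hrank 0 zero_le_one
  haveI : PreconnectedSpace (Metric.sphere (0 : EuclideanSpace ℝ (Fin n)) 1) :=
    Subtype.preconnectedSpace hconn.isPreconnected
  haveI : Nonempty (Metric.sphere (0 : EuclideanSpace ℝ (Fin n)) 1) :=
    hconn.nonempty.to_subtype
  set gg : Metric.sphere (0 : EuclideanSpace ℝ (Fin n)) 1 → Metric.sphere (0 : Eu n) 1 :=
    fun y => ⟨g y.1, by
      simp only [Metric.mem_sphere, dist_zero_right]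
      rw [hgnorm]
      simpa using y.2⟩ with hgg
  have hggc : Continuous gg := Continuous.subtype_mk (hgc.comp continuous_subtype_val) _
  have hrange : Set.range gg = {x : Metric.sphere (0 : Eu n) 1 | ((x : Eu n) 0) = 0} := by
    ext x
    constructor
    · rintro ⟨y, rfl⟩
      exact hgapp0 y.1
    · intro hx
      set y : EuclideanSpace ℝ (Fin n) := WithLp.toLp 2 fun i => (x : Eu n) i.succ with hy
      have hynorm : ‖y‖ = 1 := by
        have hxnorm : ‖(x : Eu n)‖ = 1 := by simpa using x.2
        rw [EuclideanSpace.norm_eq] at hxnorm ⊢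
        rw [← hxnorm]
        congr 1
        rw [Fin.sum_univ_succ]
        have hx0 : (x : Eu n) 0 = 0 := hx
        rw [hx0]
        simp [hy]
      refine ⟨⟨y, by simpa using hynorm⟩, ?_⟩
      apply Subtype.ext
      show g y = (x : Eu n)
      apply PiLp.ext; intro i
      refine Fin.cases ?_ ?_ i
      · rw [hgapp0]; exact hx.symm
      · intro j
        rw [hgapps]
  rw [← hrange]
  exact isPreconnected_range hggc

lemma const_of_forall_int {X : Type*} [TopologicalSpace X] {s : Set X} (hs : IsPreconnected s)
    {d : X → ℝ} (hd : ContinuousOn d s)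
    (hint : ∀ x ∈ s, ∃ m : ℤ, d x = m * (2 * Real.pi))
    {a b : X} (ha : a ∈ s) (hb : b ∈ s) : d a = d b := by
  by_contra hne
  have him : IsPreconnected (d '' s) := hs.image d hd
  obtain ⟨ma, hma⟩ := hint a ha
  obtain ⟨mb, hmb⟩ := hint b hb
  have hπ : (0:ℝ) < Real.pi := Real.pi_pos
  -- wlog d a < d b
  have key : ∀ u v : X, u ∈ s → v ∈ s → d u < d v → False := by
    intro u v hu hv huv
    obtain ⟨mu, hmu⟩ := hint u hu
    obtain ⟨mv, hmv⟩ := hint v hv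
    have hdiff : d u + Real.pi ≤ d v := by
      have hmuv : mu < mv := by
        by_contra h
        push_neg at h
        have : (mv : ℝ) ≤ mu := by exact_mod_cast h
        nlinarith
      have : (mu : ℝ) + 1 ≤ mv := by exact_mod_cast hmuv
      nlinarith
    have hmem : d u + Real.pi ∈ d '' s := by
      apply him.Icc_subset ⟨u, hu, rfl⟩ ⟨v, hv, rfl⟩
      constructor <;> linarith
    obtain ⟨w, hw, hweq⟩ := hmem
    obtain ⟨mw, hmw⟩ := hint w hw
    have : ((2 * (mw - mu) : ℤ) : ℝ) = 1 := by push_cast; nlinarith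
    have h2 : (2 * (mw - mu) : ℤ) = 1 := by exact_mod_cast this
    omega
  rcases lt_trichotomy (d a) (d b) with h | h | h
  · exact key a b ha hb h
  · exact hne h
  · exact key b a hb ha h

lemma sphere_lift {n : ℕ} (hn : 2 ≤ n) (f : Metric.sphere (0 : Eu n) 1 → Circle)
    (hf : Continuous f) :
    ∃ F : Metric.sphere (0 : Eu n) 1 → ℝ, Continuous F ∧ ∀ x, Circle.exp (F x) = f x := by
  obtain ⟨Fp, hFpc, hFp⟩ := hemi_lift f hf 1 (Or.inl rfl)
  obtain ⟨Fm, hFmc, hFm⟩ := hemi_lift f hf (-1) (Or.inr rfl)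
  have hint : ∀ x : Metric.sphere (0 : Eu n) 1, ((x : Eu n) 0) = 0 →
      ∃ m : ℤ, Fp x - Fm x = m * (2 * Real.pi) := by
    intro x hx
    have h1 : Circle.exp (Fp x) = f x := hFp x (by rw [hx]; norm_num)
    have h2 : Circle.exp (Fm x) = f x := hFm x (by rw [hx]; norm_num)
    have : Circle.exp (Fp x - Fm x) = 1 := by
      rw [Circle.exp_sub, h1, h2, div_self']
    rwa [Circle.exp_eq_one] at this
  -- a point on the equator
  have h1n : (1 : ℕ) < n + 1 := by omega
  set e1 : Eu n := EuclideanSpace.single (⟨1, h1n⟩ : Fin (n+1)) (1:ℝ) with he1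
  have he1mem : e1 ∈ Metric.sphere (0 : Eu n) 1 := by
    simp only [Metric.mem_sphere, dist_zero_right, he1, EuclideanSpace.norm_single]
    norm_num
  have he1eq : ((⟨e1, he1mem⟩ : Metric.sphere (0 : Eu n) 1) : Eu n) 0 = 0 := by
    show (EuclideanSpace.single (⟨1, h1n⟩ : Fin (n+1)) (1:ℝ) : Eu n) 0 = 0
    rw [EuclideanSpace.single_apply]
    simp [Fin.ext_iff]
  set c : ℝ := Fp ⟨e1, he1mem⟩ - Fm ⟨e1, he1mem⟩ with hc
  obtain ⟨m₀, hm₀⟩ := hint _ he1eq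
  -- the difference is constant on the equator
  have hconst : ∀ x : Metric.sphere (0 : Eu n) 1, ((x : Eu n) 0) = 0 → Fp x - Fm x = c := by
    intro x hx
    refine const_of_forall_int (s := {x : Metric.sphere (0 : Eu n) 1 | ((x : Eu n) 0) = 0})
      (d := fun y => Fp y - Fm y) (equator_preconnected hn) ?_ ?_ hx he1eq
    · apply ContinuousOn.sub
      · exact hFpc.mono (fun y hy => by simp only [Set.mem_setOf_eq] at hy ⊢; rw [hy]; norm_num)
      · exact hFmc.mono (fun y hy => by simp only [Set.mem_setOf_eq] at hy ⊢; rw [hy]; norm_num)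
    · intro y hy
      exact hint y hy
  classical
  set F : Metric.sphere (0 : Eu n) 1 → ℝ :=
    fun x => if 0 ≤ ((x : Eu n) 0) then Fp x else Fm x + c with hF
  have hDp : IsClosed {x : Metric.sphere (0 : Eu n) 1 | 0 ≤ 1 * ((x : Eu n) 0)} := by
    apply IsClosed.preimage
      (continuous_const.mul (((continuous_apply (0 : Fin (n+1))).comp (PiLp.continuous_ofLp 2 _)).comp continuous_subtype_val))
      isClosed_Ici
  have hDm : IsClosed {x : Metric.sphere (0 : Eu n) 1 | 0 ≤ (-1) * ((x : Eu n) 0)} := by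
    apply IsClosed.preimage
      (continuous_const.mul (((continuous_apply (0 : Fin (n+1))).comp (PiLp.continuous_ofLp 2 _)).comp continuous_subtype_val))
      isClosed_Ici
  have hFonp : ∀ x ∈ {x : Metric.sphere (0 : Eu n) 1 | 0 ≤ 1 * ((x : Eu n) 0)}, F x = Fp x := by
    intro x hx
    simp only [Set.mem_setOf_eq, one_mul] at hx
    rw [hF]
    simp only [if_pos hx]
  have hFonm : ∀ x ∈ {x : Metric.sphere (0 : Eu n) 1 | 0 ≤ (-1) * ((x : Eu n) 0)},
      F x = Fm x + c := by
    intro x hx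
    simp only [Set.mem_setOf_eq, neg_one_mul] at hx
    rw [hF]
    by_cases h0 : 0 ≤ ((x : Eu n) 0)
    · have hx0 : ((x : Eu n) 0) = 0 := le_antisymm (by linarith) h0
      simp only [if_pos h0]
      rw [← hconst x hx0]
      ring
    · simp only [if_neg h0]
  have hcFp : ContinuousOn F {x : Metric.sphere (0 : Eu n) 1 | 0 ≤ 1 * ((x : Eu n) 0)} :=
    ContinuousOn.congr hFpc hFonp
  have hcFm : ContinuousOn F {x : Metric.sphere (0 : Eu n) 1 | 0 ≤ (-1) * ((x : Eu n) 0)} :=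
    ContinuousOn.congr (hFmc.add continuousOn_const) hFonm
  have hcov : {x : Metric.sphere (0 : Eu n) 1 | 0 ≤ 1 * ((x : Eu n) 0)} ∪
      {x : Metric.sphere (0 : Eu n) 1 | 0 ≤ (-1) * ((x : Eu n) 0)} = Set.univ := by
    ext x
    simp only [Set.mem_union, Set.mem_setOf_eq, Set.mem_univ, iff_true, one_mul, neg_one_mul]
    rcases le_total 0 ((x : Eu n) 0) with h | h
    · exact Or.inl h
    · exact Or.inr (by linarith)
  have hFc : Continuous F := by
    rw [← continuousOn_univ, ← hcov]
    intro x hx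
    rcases hx with hx | hx
    · apply ContinuousWithinAt.union
      · exact hcFp x hx
      · by_cases hxm : x ∈ {x : Metric.sphere (0 : Eu n) 1 | 0 ≤ (-1) * ((x : Eu n) 0)}
        · exact hcFm x hxm
        · exact continuousWithinAt_of_notMem_closure (by rwa [hDm.closure_eq])
    · apply ContinuousWithinAt.union
      · by_cases hxp : x ∈ {x : Metric.sphere (0 : Eu n) 1 | 0 ≤ 1 * ((x : Eu n) 0)}
        · exact hcFp x hxp
        · exact continuousWithinAt_of_notMem_closure (by rwa [hDp.closure_eq])
      · exact hcFm x hx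
  refine ⟨F, hFc, fun x => ?_⟩
  by_cases h0 : 0 ≤ ((x : Eu n) 0)
  · rw [hFonp x (by simpa using h0)]
    exact hFp x (by simpa using h0)
  · have h0' : 0 ≤ (-1) * ((x : Eu n) 0) := by push_neg at h0; nlinarith
    rw [hFonm x h0']
    rw [Circle.exp_add, hFm x h0']
    have : Circle.exp c = 1 := by
      have hcc : c = m₀ * (2 * Real.pi) := by rw [hc]; exact hm₀
      rw [hcc, Circle.exp_eq_one]
      exact ⟨m₀, rfl⟩
    rw [this, mul_one]

lemma no_big_sphere {k n : ℕ} (hk : 0 < k) (hn : 2 ≤ n)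
    (φ : (Fin k → Circle) ≃ₜ Metric.sphere (0 : Eu n) 1) : False := by
  set i0 : Fin k := ⟨0, hk⟩ with hi0
  set f : Metric.sphere (0 : Eu n) 1 → Circle := fun x => (φ.symm x) i0 with hfdef
  have hfc : Continuous f := (continuous_apply i0).comp φ.symm.continuous
  obtain ⟨F, hFc, hF⟩ := sphere_lift hn f hfc
  set L : (Fin k → Circle) → ℝ := fun g => F (φ g) with hL
  have hLc : Continuous L := hFc.comp φ.continuous
  have hLexp : ∀ g, Circle.exp (L g) = g i0 := by
    intro g
    rw [hL]
    rw [hF (φ g)]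
    rw [hfdef]
    simp
  -- L is additive up to constant
  have hadd : ∀ x y, L (x * y) = L x + L y - L 1 := by
    intro x y
    have hψint : ∀ y, ∃ m : ℤ, (L (x * y) - L y - L x + L 1) = m * (2 * Real.pi) := by
      intro y
      have : Circle.exp (L (x * y) - L y - L x + L 1) = 1 := by
        rw [Circle.exp_add, Circle.exp_sub, Circle.exp_sub]
        rw [hLexp, hLexp, hLexp, hLexp]
        have hxy : (x * y) i0 = x i0 * y i0 := rfl
        have h1 : (1 : Fin k → Circle) i0 = 1 := rfl
        rw [hxy, h1]
        rw [mul_div_cancel_right, div_self']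
        norm_num
      rwa [Circle.exp_eq_one] at this
    have hψc : Continuous fun y => L (x * y) - L y - L x + L 1 := by
      have h1 : Continuous fun y : Fin k → Circle => x * y :=
        continuous_const.mul continuous_id
      exact (((hLc.comp h1).sub hLc).sub continuous_const).add continuous_const
    haveI : ConnectedSpace Circle :=
      Function.Surjective.connectedSpace (f := ⇑Circle.exp)
        (fun z => ⟨Complex.arg z, Circle.exp_arg z⟩) Circle.exp.continuous
    have hconst := const_of_forall_int (s := (Set.univ : Set (Fin k → Circle)))
      isPreconnected_univ hψc.continuousOn (fun y _ => hψint y)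
      (Set.mem_univ y) (Set.mem_univ 1)
    have h1 : L (x * 1) - L 1 - L x + L 1 = 0 := by rw [mul_one]; ring
    rw [h1] at hconst
    linarith [hconst]
  set c : (Fin k → Circle) → ℝ := fun g => L g - L 1 with hcdef
  have hcadd : ∀ x y, c (x * y) = c x + c y := by
    intro x y
    rw [hcdef]
    simp only
    rw [hadd]
    ring
  have hcc : Continuous c := hLc.sub continuous_const
  -- c is bounded, but c (x ^ m) = m • c x, so c = 0
  have hczero : ∀ x, c x = 0 := by
    intro x
    by_contra hcx
    haveI : ConnectedSpace Circle :=
      Function.Surjective.connectedSpace (f := ⇑Circle.exp)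
        (fun z => ⟨Complex.arg z, Circle.exp_arg z⟩) Circle.exp.continuous
    obtain ⟨z, -, hz⟩ := isCompact_univ.exists_isMaxOn ⟨1, Set.mem_univ 1⟩
      (continuous_abs.comp hcc).continuousOn
    have hc1 : c 1 = 0 := by
      have h1 : c 1 + c 1 = c 1 := by rw [← hcadd, mul_one]
      linarith
    have hpow : ∀ m : ℕ, c (x ^ m) = m * c x := by
      intro m
      induction m with
      | zero => rw [pow_zero, hc1]; norm_num
      | succ m ih =>
        rw [pow_succ, hcadd, ih]
        push_cast
        ring
    obtain ⟨m, hm⟩ := exists_nat_gt (|c z| / |c x|)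
    have hcxpos : 0 < |c x| := abs_pos.2 hcx
    have h1 : |c z| < m * |c x| := by
      rw [div_lt_iff₀ hcxpos] at hm
      linarith
    have h2 : |c (x ^ m)| ≤ |c z| := hz (Set.mem_univ (x ^ m))
    rw [hpow m, abs_mul, Nat.abs_cast] at h2
    linarith
  -- hence the first coordinate map is constant, contradiction
  have hone : ∀ g : Fin k → Circle, g i0 = 1 := by
    intro g
    have hLg : L g = L 1 := by
      have h : L g - L 1 = 0 := hczero g
      linarith
    have h2 := hLexp g
    rw [hLg, hLexp 1] at h2
    exact h2.symm
  have hbad := hone (fun _ => Circle.exp Real.pi)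
  have : (Circle.exp Real.pi : ℂ) = (1 : Circle) := by rw [hbad]
  rw [Circle.coe_exp, Complex.exp_pi_mul_I] at this
  norm_num [Circle.coe_one] at this

lemma single_mem_sphere {n : ℕ} (i : Fin (n+1)) (a : ℝ) (ha : ‖a‖ = 1) :
    EuclideanSpace.single i a ∈ Metric.sphere (0 : Eu n) 1 := by
  simp only [Metric.mem_sphere, dist_zero_right, EuclideanSpace.norm_single]
  exact ha

lemma exp_fiber_countable (z : Circle) : {t : ℝ | Circle.exp t = z}.Countable := by
  apply Set.Countable.mono ?_ (Set.countable_range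
    (fun m : ℤ => Complex.arg (z : ℂ) + m * (2 * Real.pi)))
  intro t ht
  have h1 : Circle.exp t = Circle.exp (Complex.arg (z : ℂ)) := by
    rw [Circle.exp_arg]; exact ht
  have h2 : Circle.exp (t - Complex.arg (z : ℂ)) = 1 := by
    rw [Circle.exp_sub, h1, div_self']
  rw [Circle.exp_eq_one] at h2
  obtain ⟨m, hm⟩ := h2
  refine ⟨m, ?_⟩
  show Complex.arg (z : ℂ) + m * (2 * Real.pi) = t
  linarith

lemma no_big_torus {k : ℕ} (hk : 2 ≤ k)
    (φ : (Fin k → Circle) ≃ₜ Metric.sphere (0 : Eu 1) 1) : False := by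
  have h1 : ‖(1:ℝ)‖ = 1 := by norm_num
  have hm1 : ‖(-1:ℝ)‖ = 1 := by norm_num
  set pp : Metric.sphere (0 : Eu 1) 1 := ⟨_, single_mem_sphere 0 1 h1⟩ with hpp
  set pm : Metric.sphere (0 : Eu 1) 1 := ⟨_, single_mem_sphere 0 (-1) hm1⟩ with hpm
  set qp : Metric.sphere (0 : Eu 1) 1 := ⟨_, single_mem_sphere 1 1 h1⟩ with hqp
  set qm : Metric.sphere (0 : Eu 1) 1 := ⟨_, single_mem_sphere 1 (-1) hm1⟩ with hqm
  set Φ : (Fin k → ℝ) → (Fin k → Circle) := fun v i => Circle.exp (v i) with hΦ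
  have hΦc : Continuous Φ :=
    continuous_pi fun i => Circle.exp.continuous.comp (continuous_apply i)
  have hΦsurj : Function.Surjective Φ := by
    intro g
    exact ⟨fun i => Complex.arg ((g i : Circle) : ℂ), funext fun i => Circle.exp_arg (g i)⟩
  have hfib : ∀ g : Fin k → Circle, (Φ ⁻¹' {g}).Countable := by
    intro g
    have hsub : Φ ⁻¹' {g} ⊆ {v : Fin k → ℝ | ∀ i, v i ∈ {t : ℝ | Circle.exp t = g i}} := by
      intro v hv
      intro i
      have : Φ v = g := hv
      exact congrFun this i
    exact Set.Countable.mono hsub (Set.countable_pi fun i => exp_fiber_countable (g i))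
  set A : Set (Fin k → ℝ) := Φ ⁻¹' {φ.symm pp, φ.symm pm} with hA
  have hAc : A.Countable := by
    rw [hA, Set.insert_eq, Set.preimage_union]
    exact (hfib _).union (hfib _)
  have hrank : 1 < Module.rank ℝ (Fin k → ℝ) := by
    rw [rank_fin_fun]
    exact_mod_cast lt_of_lt_of_le one_lt_two hk
  have hpath : IsPathConnected Aᶜ := hAc.isPathConnected_compl_of_one_lt_rank hrank
  have hpre1 : IsPreconnected (({φ.symm pp, φ.symm pm} : Set (Fin k → Circle))ᶜ) := by
    have himg : Φ '' Aᶜ = ({φ.symm pp, φ.symm pm} : Set (Fin k → Circle))ᶜ := by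
      rw [hA, ← Set.preimage_compl]
      exact Set.image_preimage_eq _ hΦsurj
    rw [← himg]
    exact hpath.isConnected.isPreconnected.image Φ hΦc.continuousOn
  have hpre : IsPreconnected (({pp, pm} : Set (Metric.sphere (0 : Eu 1) 1))ᶜ) := by
    have himg : φ '' (({φ.symm pp, φ.symm pm} : Set (Fin k → Circle))ᶜ) =
        (({pp, pm} : Set (Metric.sphere (0 : Eu 1) 1))ᶜ) := by
      rw [Set.image_compl_eq φ.bijective, Set.image_pair,
        Homeomorph.apply_symm_apply, Homeomorph.apply_symm_apply]
    rw [← himg]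
    exact hpre1.image φ φ.continuous.continuousOn
  -- q points lie in the complement
  have hqmem : ∀ q : Metric.sphere (0 : Eu 1) 1, ((q : Eu 1) 1 = 1 ∨ (q : Eu 1) 1 = -1) →
      q ∈ (({pp, pm} : Set (Metric.sphere (0 : Eu 1) 1))ᶜ) := by
    intro q hq
    simp only [Set.mem_compl_iff, Set.mem_insert_iff, Set.mem_singleton_iff]
    push_neg
    constructor
    · intro h
      have := congrArg (fun y : Metric.sphere (0 : Eu 1) 1 => ((y : Eu 1)) 1) h
      simp only [hpp] at this
      rw [EuclideanSpace.single_apply] at this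
      norm_num [Fin.ext_iff] at this
      rcases hq with h' | h' <;> rw [h'] at this <;> norm_num at this
    · intro h
      have := congrArg (fun y : Metric.sphere (0 : Eu 1) 1 => ((y : Eu 1)) 1) h
      simp only [hpm] at this
      rw [EuclideanSpace.single_apply] at this
      norm_num [Fin.ext_iff] at this
      rcases hq with h' | h' <;> rw [h'] at this <;> norm_num at this
  have hq1 : (qp : Eu 1) 1 = 1 := by
    rw [hqp]
    show (EuclideanSpace.single (1 : Fin 2) (1:ℝ)) 1 = 1
    rw [EuclideanSpace.single_apply]
    norm_num
  have hq2 : (qm : Eu 1) 1 = -1 := by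
    rw [hqm]
    show (EuclideanSpace.single (1 : Fin 2) (-1:ℝ)) 1 = -1
    rw [EuclideanSpace.single_apply]
    norm_num
  have hmem1 := hqmem qp (Or.inl hq1)
  have hmem2 := hqmem qm (Or.inr hq2)
  -- IVT on the second coordinate
  have hiv := hpre.intermediate_value hmem2 hmem1
    (f := fun x : Metric.sphere (0 : Eu 1) 1 => (x : Eu 1) 1)
    ((((continuous_apply (1 : Fin 2)).comp (PiLp.continuous_ofLp 2 _)).comp continuous_subtype_val).continuousOn)
  have h0mem : (0:ℝ) ∈ Set.Icc ((qm : Eu 1) 1) ((qp : Eu 1) 1) := by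
    rw [hq1, hq2]; constructor <;> norm_num
  obtain ⟨x, hxs, hx1p⟩ := hiv h0mem
  have hx1 : (x : Eu 1) 1 = 0 := hx1p
  -- x has second coordinate 0, so x = pp or pm
  have hxnorm : ‖(x : Eu 1)‖ = 1 := by
    have := x.2
    rwa [mem_sphere_zero_iff_norm] at this
  have hsum : (x : Eu 1) 0 ^ 2 + (x : Eu 1) 1 ^ 2 = 1 := by
    rw [EuclideanSpace.norm_eq] at hxnorm
    have h := hxnorm
    rw [Fin.sum_univ_two] at h
    have h2 : ((x : Eu 1) 0) ^ 2 + ((x : Eu 1) 1) ^ 2 =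
        ‖(x : Eu 1) 0‖ ^ 2 + ‖(x : Eu 1) 1‖ ^ 2 := by
      rw [Real.norm_eq_abs, Real.norm_eq_abs, sq_abs, sq_abs]
    rw [h2]
    nlinarith [Real.sq_sqrt (by positivity : (0:ℝ) ≤ ‖(x : Eu 1) 0‖ ^ 2 + ‖(x : Eu 1) 1‖ ^ 2),
      Real.sqrt_nonneg (‖(x : Eu 1) 0‖ ^ 2 + ‖(x : Eu 1) 1‖ ^ 2)]
  rw [hx1] at hsum
  have hx0 : (x : Eu 1) 0 = 1 ∨ (x : Eu 1) 0 = -1 := by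
    have : ((x : Eu 1) 0 - 1) * ((x : Eu 1) 0 + 1) = 0 := by nlinarith
    rcases mul_eq_zero.1 this with h | h
    · left; linarith
    · right; linarith
  have hxvec : ∀ (a : ℝ), (x : Eu 1) 0 = a →
      (x : Eu 1) = EuclideanSpace.single (0 : Fin 2) a := by
    intro a ha
    apply PiLp.ext; intro i
    revert i
    rw [Fin.forall_fin_two]
    constructor
    · rw [ha, EuclideanSpace.single_apply]
      norm_num
    · rw [hx1, EuclideanSpace.single_apply]
      norm_num
  simp only [Set.mem_compl_iff, Set.mem_insert_iff, Set.mem_singleton_iff] at hxs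
  push_neg at hxs
  rcases hx0 with h | h
  · exact hxs.1 (Subtype.ext (hxvec 1 h))
  · exact hxs.2 (Subtype.ext (hxvec (-1) h))

/-- **A torus acting faithfully and transitively on a sphere forces `k = 1` and `n = 1`.**
If the `k`-torus `T^k = (S¹)^k` acts continuously on the unit sphere `Sⁿ ⊆ ℝ^{n+1}`,
and the action is faithful and transitive, then `k = 1` and `n = 1`. -/
theorem stmt1 (k n : ℕ)
    [MulAction (Fin k → Circle) (Metric.sphere (0 : EuclideanSpace ℝ (Fin (n + 1))) 1)]
    [ContinuousSMul (Fin k → Circle) (Metric.sphere (0 : EuclideanSpace ℝ (Fin (n + 1))) 1)]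
    (hfaithful : ∀ g : Fin k → Circle,
      (∀ x : Metric.sphere (0 : EuclideanSpace ℝ (Fin (n + 1))) 1, g • x = x) → g = 1)
    (htrans : ∀ x y : Metric.sphere (0 : EuclideanSpace ℝ (Fin (n + 1))) 1, ∃ g : Fin k → Circle,
      g • x = y) :
    k = 1 ∧ n = 1 := by
  have ha : EuclideanSpace.single (0 : Fin (n+1)) (1:ℝ) ∈
      Metric.sphere (0 : EuclideanSpace ℝ (Fin (n+1))) 1 :=
    single_mem_sphere _ _ (by norm_num)
  have hb : EuclideanSpace.single (0 : Fin (n+1)) (-1:ℝ) ∈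
      Metric.sphere (0 : EuclideanSpace ℝ (Fin (n+1))) 1 :=
    single_mem_sphere _ _ (by norm_num)
  set x₀ : Metric.sphere (0 : EuclideanSpace ℝ (Fin (n+1))) 1 := ⟨_, ha⟩ with hx₀
  set x₁ : Metric.sphere (0 : EuclideanSpace ℝ (Fin (n+1))) 1 := ⟨_, hb⟩ with hx₁
  have hx01 : x₀ ≠ x₁ := by
    intro h
    have := congrArg (fun y : Metric.sphere (0 : EuclideanSpace ℝ (Fin (n+1))) 1 =>
      ((y : EuclideanSpace ℝ (Fin (n+1)))) 0) h
    simp only [hx₀, hx₁] at this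
    rw [EuclideanSpace.single_apply, EuclideanSpace.single_apply] at this
    norm_num at this
  -- k must be positive
  have hk : 0 < k := by
    rcases Nat.eq_zero_or_pos k with h0 | h
    · exfalso
      subst h0
      obtain ⟨g, hg⟩ := htrans x₀ x₁
      have hg1 : g = 1 := funext fun i => i.elim0
      rw [hg1, one_smul] at hg
      exact hx01 hg
    · exact h
  -- the orbit map is a homeomorphism
  have hinj : Function.Injective (fun g : Fin k → Circle => g • x₀) := by
    intro g h hgh
    have hgh' : g • x₀ = h • x₀ := hgh
    have hfix : ∀ y : Metric.sphere (0 : EuclideanSpace ℝ (Fin (n+1))) 1, (h⁻¹ * g) • y = y := by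
      intro y
      obtain ⟨u, hu⟩ := htrans x₀ y
      rw [← hu, smul_smul, mul_comm, ← smul_smul]
      congr 1
      rw [mul_smul, hgh', inv_smul_smul]
    have := hfaithful _ hfix
    rw [inv_mul_eq_one] at this
    exact this.symm
  have hsurj : Function.Surjective (fun g : Fin k → Circle => g • x₀) := fun y => htrans x₀ y
  set e : (Fin k → Circle) ≃ Metric.sphere (0 : EuclideanSpace ℝ (Fin (n+1))) 1 :=
    Equiv.ofBijective _ ⟨hinj, hsurj⟩ with he
  have hec : Continuous e := by
    show Continuous fun g : Fin k → Circle => g • x₀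
    exact continuous_id.smul continuous_const
  set φ : (Fin k → Circle) ≃ₜ Metric.sphere (0 : EuclideanSpace ℝ (Fin (n+1))) 1 :=
    hec.homeoOfEquivCompactToT2 with hφ
  haveI : ConnectedSpace Circle :=
    Function.Surjective.connectedSpace (f := ⇑Circle.exp)
      (fun z => ⟨Complex.arg z, Circle.exp_arg z⟩) Circle.exp.continuous
  haveI : PreconnectedSpace (Metric.sphere (0 : EuclideanSpace ℝ (Fin (n+1))) 1) :=
    (φ.surjective.connectedSpace φ.continuous).toPreconnectedSpace
  -- n must be positive
  have hn : 0 < n := by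
    rcases Nat.eq_zero_or_pos n with h0 | h
    · exfalso
      subst h0
      have hiv := intermediate_value_univ (α := ℝ) x₁ x₀
        (f := fun x : Metric.sphere (0 : EuclideanSpace ℝ (Fin 1)) 1 =>
          (x : EuclideanSpace ℝ (Fin 1)) 0)
        ((((continuous_apply (0 : Fin 1)).comp (PiLp.continuous_ofLp 2 _)).comp continuous_subtype_val))
      have hfx₀ : ((x₀ : EuclideanSpace ℝ (Fin 1))) 0 = 1 := by
        rw [hx₀]
        show (EuclideanSpace.single (0 : Fin 1) (1:ℝ)) 0 = 1
        rw [EuclideanSpace.single_apply]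
        norm_num
      have hfx₁ : ((x₁ : EuclideanSpace ℝ (Fin 1))) 0 = -1 := by
        rw [hx₁]
        show (EuclideanSpace.single (0 : Fin 1) (-1:ℝ)) 0 = -1
        rw [EuclideanSpace.single_apply]
        norm_num
      have h0mem : (0:ℝ) ∈ Set.Icc (((x₁ : EuclideanSpace ℝ (Fin 1))) 0)
          (((x₀ : EuclideanSpace ℝ (Fin 1))) 0) := by
        rw [hfx₀, hfx₁]
        constructor <;> norm_num
      obtain ⟨c, hc⟩ := hiv h0mem
      have hc0 : ((c : EuclideanSpace ℝ (Fin 1))) 0 = 0 := hc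
      have hcnorm : ‖(c : EuclideanSpace ℝ (Fin 1))‖ = 1 := by
        have := c.2
        rwa [mem_sphere_zero_iff_norm] at this
      rw [EuclideanSpace.norm_eq, Fin.sum_univ_one, hc0] at hcnorm
      simp at hcnorm
    · exact h
  -- n cannot be ≥ 2
  have hn1 : n = 1 := by
    by_contra h
    have h2 : 2 ≤ n := by omega
    exact no_big_sphere hk h2 φ
  subst hn1
  have hk1 : k = 1 := by
    by_contra h
    have h2 : 2 ≤ k := by omega
    exact no_big_torus h2 φ
  exact ⟨hk1, rfl⟩
end

section
/- Let the circle group S¹ = {z ∈ ℂ : |z| = 1} act on the unit sphere S² = {v ∈ ℝ³ : ‖v‖ = 1} (with the metric induced from ℝ³) such that each group element acts by an isometry of S² and the action map S¹ × S² → S² is continuous. If the action is nontrivial (there exist g ∈ S¹ and x ∈ S² with g·x ≠ x), then the fixed-point set {x ∈ S² : g·x = x for all g ∈ S¹} has exactly two elements. -/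
open scoped RealInnerProductSpace
open Matrix

noncomputable section StmtAux

open Matrix in
instance : ConnectedSpace Circle :=
  Function.Surjective.connectedSpace (f := ⇑Circle.exp)
    (fun z => ⟨Complex.arg z, Circle.exp_arg z⟩) Circle.exp.continuous

private lemma aux_sign {ψ : Circle → ℝ} (hc : Continuous ψ) (h1 : ψ 1 = 1)
    (h : ∀ g, ψ g = 1 ∨ ψ g = -1) (g : Circle) : ψ g = 1 := by
  rcases h g with h' | h'
  · exact h'
  · exfalso
    have h0 : (0 : ℝ) ∈ Set.Icc (ψ g) (ψ 1) := by
      rw [h1, h']; constructor <;> norm_num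
    obtain ⟨k, hk⟩ := intermediate_value_univ g 1 hc h0
    rcases h k with h2 | h2 <;> rw [hk] at h2 <;> norm_num at h2

abbrev Sp3 := Metric.sphere (0 : EuclideanSpace ℝ (Fin 3)) 1

def ee (i : Fin 3) : Sp3 :=
  ⟨EuclideanSpace.single i 1, by
    rw [mem_sphere_zero_iff_norm, EuclideanSpace.norm_single]; norm_num⟩

variable [MulAction Circle Sp3]

lemma sp_norm (x : Sp3) : ‖(x : EuclideanSpace ℝ (Fin 3))‖ = 1 :=
  mem_sphere_zero_iff_norm.mp x.2

lemma act_inner (hiso : ∀ g : Circle, Isometry (fun x : Sp3 => g • x))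
    (g : Circle) (x y : Sp3) :
    ⟪((g • x : Sp3) : EuclideanSpace ℝ (Fin 3)), ((g • y : Sp3) : EuclideanSpace ℝ (Fin 3))⟫
      = ⟪(x : EuclideanSpace ℝ (Fin 3)), (y : EuclideanSpace ℝ (Fin 3))⟫ := by
  have hd := (hiso g).dist_eq x y
  rw [Subtype.dist_eq, Subtype.dist_eq, dist_eq_norm, dist_eq_norm] at hd
  have h2 := congrArg (fun t : ℝ => t ^ 2) hd
  simp only [norm_sub_sq_real] at h2
  rw [sp_norm, sp_norm, sp_norm, sp_norm] at h2
  linarith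

lemma ee_orth (hiso : ∀ g : Circle, Isometry (fun x : Sp3 => g • x)) (g : Circle) (i j : Fin 3) :
    ⟪((g • ee i : Sp3) : EuclideanSpace ℝ (Fin 3)), ((g • ee j : Sp3) : EuclideanSpace ℝ (Fin 3))⟫
      = if i = j then 1 else 0 := by
  rw [act_inner hiso]
  show ⟪EuclideanSpace.single i (1:ℝ), EuclideanSpace.single j (1:ℝ)⟫ = _
  simp [EuclideanSpace.inner_single_left, EuclideanSpace.single_apply, eq_comm]

def fmap (g : Circle) : EuclideanSpace ℝ (Fin 3) →ₗ[ℝ] EuclideanSpace ℝ (Fin 3) :=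
  ∑ i, ((EuclideanSpace.proj i).toLinearMap).smulRight ((g • ee i : Sp3) : EuclideanSpace ℝ (Fin 3))

lemma fmap_apply (g : Circle) (x : EuclideanSpace ℝ (Fin 3)) :
    fmap g x = ∑ i, x i • ((g • ee i : Sp3) : EuclideanSpace ℝ (Fin 3)) := by
  simp [fmap]

lemma inner_eq_sum (x y : EuclideanSpace ℝ (Fin 3)) : ⟪x, y⟫ = ∑ i, x i * y i := by
  simp [PiLp.inner_apply, RCLike.inner_apply, mul_comm]

lemma fmap_inner (hiso : ∀ g : Circle, Isometry (fun x : Sp3 => g • x))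
    (g : Circle) (x y : EuclideanSpace ℝ (Fin 3)) : ⟪fmap g x, fmap g y⟫ = ⟪x, y⟫ := by
  rw [fmap_apply, fmap_apply, sum_inner, inner_eq_sum]
  refine Finset.sum_congr rfl fun i _ => ?_
  rw [inner_sum]
  rw [Finset.sum_eq_single i]
  · rw [real_inner_smul_left, real_inner_smul_right, ee_orth hiso]
    simp
  · intro j _ hj
    rw [real_inner_smul_left, real_inner_smul_right, ee_orth hiso]
    simp [hj.symm]
  · intro h; exact absurd (Finset.mem_univ i) h

lemma inner_ee (i : Fin 3) (y : EuclideanSpace ℝ (Fin 3)) :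
    ⟪((ee i : Sp3) : EuclideanSpace ℝ (Fin 3)), y⟫ = y i := by
  show ⟪EuclideanSpace.single i (1:ℝ), y⟫ = y i
  simp [EuclideanSpace.inner_single_left]

lemma fmap_sphere (hiso : ∀ g : Circle, Isometry (fun x : Sp3 => g • x))
    (g : Circle) (v : Sp3) :
    fmap g (v : EuclideanSpace ℝ (Fin 3)) = ((g • v : Sp3) : EuclideanSpace ℝ (Fin 3)) := by
  set w := ((g • v : Sp3) : EuclideanSpace ℝ (Fin 3)) with hw
  set z := fmap g (v : EuclideanSpace ℝ (Fin 3)) with hz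
  have hvv : ⟪(v : EuclideanSpace ℝ (Fin 3)), (v : EuclideanSpace ℝ (Fin 3))⟫ = 1 := by
    rw [real_inner_self_eq_norm_sq, sp_norm]; norm_num
  have h1 : ⟪z, z⟫ = 1 := by rw [hz, fmap_inner hiso, hvv]
  have h3 : ⟪w, w⟫ = 1 := by rw [real_inner_self_eq_norm_sq, sp_norm]; norm_num
  have h2 : ⟪w, z⟫ = 1 := by
    rw [hz, fmap_apply, inner_sum]
    have : ∀ i, ⟪w, (v : EuclideanSpace ℝ (Fin 3)) i •
        ((g • ee i : Sp3) : EuclideanSpace ℝ (Fin 3))⟫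
        = (v : EuclideanSpace ℝ (Fin 3)) i * (v : EuclideanSpace ℝ (Fin 3)) i := by
      intro i
      rw [real_inner_smul_right, hw, act_inner hiso, real_inner_comm, inner_ee]
    rw [Finset.sum_congr rfl fun i _ => this i, ← inner_eq_sum, hvv]
  have hnorm : ‖w - z‖ ^ 2 = 0 := by
    rw [norm_sub_sq_real, ← real_inner_self_eq_norm_sq, ← real_inner_self_eq_norm_sq, h1, h2, h3]
    ring
  have : w - z = 0 := by
    rw [pow_eq_zero_iff (two_ne_zero)] at hnorm
    exact norm_eq_zero.mp hnorm
  exact (sub_eq_zero.mp this).symm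
  
lemma ee_coe (i : Fin 3) :
    ((ee i : Sp3) : EuclideanSpace ℝ (Fin 3)) = EuclideanSpace.single i 1 := rfl

lemma fmap_ee (hiso : ∀ g : Circle, Isometry (fun x : Sp3 => g • x)) (g : Circle) (i : Fin 3) :
    fmap g (EuclideanSpace.single i 1) = ((g • ee i : Sp3) : EuclideanSpace ℝ (Fin 3)) := by
  rw [← ee_coe, fmap_sphere hiso]

lemma fmap_mul (hiso : ∀ g : Circle, Isometry (fun x : Sp3 => g • x)) (g h : Circle) :
    fmap (g * h) = (fmap g).comp (fmap h) := by
  apply Module.Basis.ext (EuclideanSpace.basisFun (Fin 3) ℝ).toBasis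
  intro i
  have hb : ((EuclideanSpace.basisFun (Fin 3) ℝ).toBasis i : EuclideanSpace ℝ (Fin 3))
      = EuclideanSpace.single i 1 := by
    rw [OrthonormalBasis.coe_toBasis, EuclideanSpace.basisFun_apply]
  rw [hb, fmap_ee hiso, LinearMap.comp_apply, fmap_ee hiso, fmap_sphere hiso, mul_smul]

lemma fmap_one (hiso : ∀ g : Circle, Isometry (fun x : Sp3 => g • x)) :
    fmap (1 : Circle) = LinearMap.id := by
  apply Module.Basis.ext (EuclideanSpace.basisFun (Fin 3) ℝ).toBasis
  intro i
  have hb : ((EuclideanSpace.basisFun (Fin 3) ℝ).toBasis i : EuclideanSpace ℝ (Fin 3))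
      = EuclideanSpace.single i 1 := by
    rw [OrthonormalBasis.coe_toBasis, EuclideanSpace.basisFun_apply]
  rw [hb, fmap_ee hiso, one_smul, LinearMap.id_apply, ee_coe]

def Mg (g : Circle) : Matrix (Fin 3) (Fin 3) ℝ :=
  LinearMap.toMatrix (EuclideanSpace.basisFun (Fin 3) ℝ).toBasis
    (EuclideanSpace.basisFun (Fin 3) ℝ).toBasis (fmap g)

lemma Mg_entry (hiso : ∀ g : Circle, Isometry (fun x : Sp3 => g • x)) (g : Circle) (i j : Fin 3) :
    Mg g i j = ((g • ee j : Sp3) : EuclideanSpace ℝ (Fin 3)) i := by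
  rw [Mg, LinearMap.toMatrix_apply]
  have hb : ((EuclideanSpace.basisFun (Fin 3) ℝ).toBasis j : EuclideanSpace ℝ (Fin 3))
      = EuclideanSpace.single j 1 := by
    rw [OrthonormalBasis.coe_toBasis, EuclideanSpace.basisFun_apply]
  rw [hb, fmap_ee hiso, OrthonormalBasis.coe_toBasis_repr_apply, EuclideanSpace.basisFun_repr]

lemma Mg_cont (hiso : ∀ g : Circle, Isometry (fun x : Sp3 => g • x))
    (hcont : Continuous (fun p : Circle × Sp3 => p.1 • p.2)) :
    Continuous Mg := by
  apply continuous_matrix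
  intro i j
  simp only [Mg_entry hiso]
  have h1 : Continuous fun g : Circle => (g • ee j : Sp3) :=
    hcont.comp (continuous_id.prodMk continuous_const)
  exact (EuclideanSpace.proj i).continuous.comp (continuous_subtype_val.comp h1)

lemma Mg_orth (hiso : ∀ g : Circle, Isometry (fun x : Sp3 => g • x)) (g : Circle) :
    (Mg g)ᵀ * Mg g = 1 := by
  ext i j
  rw [Matrix.mul_apply, Matrix.one_apply]
  have : ∀ k, (Mg g)ᵀ i k * Mg g k j
      = ((g • ee i : Sp3) : EuclideanSpace ℝ (Fin 3)) k
        * ((g • ee j : Sp3) : EuclideanSpace ℝ (Fin 3)) k := by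
    intro k
    rw [Matrix.transpose_apply, Mg_entry hiso, Mg_entry hiso]
  rw [Finset.sum_congr rfl fun k _ => this k, ← inner_eq_sum, ee_orth hiso]

lemma Mg_det (hiso : ∀ g : Circle, Isometry (fun x : Sp3 => g • x))
    (hcont : Continuous (fun p : Circle × Sp3 => p.1 • p.2)) (g : Circle) :
    (Mg g).det = 1 := by
  refine aux_sign ((Mg_cont hiso hcont).matrix_det) ?_ ?_ g
  · rw [Mg, fmap_one hiso, LinearMap.toMatrix_id, Matrix.det_one]
  · intro g'
    have h := congrArg Matrix.det (Mg_orth hiso g')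
    rw [Matrix.det_mul, Matrix.det_transpose, Matrix.det_one] at h
    exact mul_self_eq_one_iff.mp h

lemma fmap_det (hiso : ∀ g : Circle, Isometry (fun x : Sp3 => g • x))
    (hcont : Continuous (fun p : Circle × Sp3 => p.1 • p.2)) (g : Circle) :
    LinearMap.det (fmap g) = 1 := by
  rw [← LinearMap.det_toMatrix (EuclideanSpace.basisFun (Fin 3) ℝ).toBasis]
  exact Mg_det hiso hcont g

lemma det_sub_one_eq_zero {A : Matrix (Fin 3) (Fin 3) ℝ} (hA : Aᵀ * A = 1)
    (hdet : A.det = 1) : (A - 1).det = 0 := by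
  have h1 : (A - 1)ᵀ = -(Aᵀ * (A - 1)) := by
    rw [Matrix.mul_sub, hA, Matrix.mul_one, Matrix.transpose_sub, Matrix.transpose_one]
    simp [neg_sub]
  have h2 : (A - 1).det = -(A - 1).det := by
    conv_lhs => rw [← Matrix.det_transpose, h1]
    rw [Matrix.det_neg, Matrix.det_mul, Matrix.det_transpose, hdet, Fintype.card_fin]
    norm_num
  linarith

lemma fmap_det_sub_id (hiso : ∀ g : Circle, Isometry (fun x : Sp3 => g • x)) (g : Circle) :
    LinearMap.det (fmap g - LinearMap.id) = (Mg g - 1).det := by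
  rw [← LinearMap.det_toMatrix (EuclideanSpace.basisFun (Fin 3) ℝ).toBasis]
  congr 1
  rw [map_sub, LinearMap.toMatrix_id]
  rfl

lemma mem_fix_iff (f : EuclideanSpace ℝ (Fin 3) →ₗ[ℝ] EuclideanSpace ℝ (Fin 3))
    (v : EuclideanSpace ℝ (Fin 3)) :
    v ∈ LinearMap.ker (f - LinearMap.id) ↔ f v = v := by
  rw [LinearMap.mem_ker, LinearMap.sub_apply, LinearMap.id_apply, sub_eq_zero]

lemma fixed_rank_le_one {f : EuclideanSpace ℝ (Fin 3) →ₗ[ℝ] EuclideanSpace ℝ (Fin 3)}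
    (hinner : ∀ x y, ⟪f x, f y⟫ = ⟪x, y⟫)
    (hdet : LinearMap.det f = 1) (hne : f ≠ LinearMap.id) :
    Module.finrank ℝ (LinearMap.ker (f - LinearMap.id)) ≤ 1 := by
  set F := LinearMap.ker (f - LinearMap.id) with hF
  by_contra hr
  push_neg at hr
  obtain ⟨vf, hvf⟩ := exists_linearIndependent_of_le_finrank hr
  set c : Fin 2 → EuclideanSpace ℝ (Fin 3) := ⇑F.subtype ∘ vf with hcdef
  have hc : LinearIndependent ℝ c := hvf.map' F.subtype (Submodule.ker_subtype F)
  set W := Submodule.span ℝ (Set.range c) with hW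
  have hcfix : ∀ i, f (c i) = c i := fun i => (mem_fix_iff f (c i)).mp (vf i).2
  have hWfix : ∀ z ∈ W, f z = z := by
    intro z hz
    have hle : W ≤ F := by
      rw [hW, Submodule.span_le]
      rintro _ ⟨i, rfl⟩
      exact (vf i).2
    exact (mem_fix_iff f z).mp (hle hz)
  have hWrank : Module.finrank ℝ W = 2 := by
    rw [hW, finrank_span_eq_card hc, Fintype.card_fin]
  have hUrank : Module.finrank ℝ Wᗮ = 1 := by
    have := Submodule.finrank_add_finrank_orthogonal W
    rw [hWrank, finrank_euclideanSpace_fin] at this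
    omega
  have hUne : Wᗮ ≠ ⊥ := by
    intro h
    rw [h, finrank_bot] at hUrank
    omega
  obtain ⟨u, huU, hu0⟩ := Submodule.ne_bot_iff _ |>.mp hUne
  have hUspan : Submodule.span ℝ {u} = Wᗮ := by
    apply Submodule.eq_of_le_of_finrank_le
    · rw [Submodule.span_le, Set.singleton_subset_iff]; exact huU
    · rw [hUrank, finrank_span_singleton hu0]
  have hfu : f u ∈ Wᗮ := by
    rw [Submodule.mem_orthogonal]
    intro z hz
    rw [← hWfix z hz, hinner]
    exact (Submodule.mem_orthogonal W u).mp huU z hz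
  obtain ⟨c₀, hc₀⟩ := Submodule.mem_span_singleton.mp (hUspan ▸ hfu)
  have huu : ⟪u, u⟫ ≠ 0 := inner_self_ne_zero.mpr hu0
  have hc₀sq : c₀ = 1 ∨ c₀ = -1 := by
    have h := hinner u u
    rw [← hc₀, real_inner_smul_left, real_inner_smul_right] at h
    have h3 : (c₀ * c₀ - 1) * ⟪u, u⟫ = 0 := by linear_combination h
    rcases mul_eq_zero.mp h3 with h4 | h4
    · exact mul_self_eq_one_iff.mp (by linarith)
    · exact absurd h4 huu
  rcases hc₀sq with h1 | h1
  · -- f u = u, so f = id, contradiction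
    apply hne
    have hfuu : f u = u := by rw [← hc₀, h1, one_smul]
    have htop : W ⊔ Wᗮ = ⊤ := Submodule.sup_orthogonal_of_hasOrthogonalProjection
    apply LinearMap.ext
    intro x
    have hx : x ∈ W ⊔ Wᗮ := by rw [htop]; trivial
    obtain ⟨y, hy, z, hz, rfl⟩ := Submodule.mem_sup.mp hx
    obtain ⟨a, ha⟩ := Submodule.mem_span_singleton.mp (hUspan ▸ hz)
    rw [LinearMap.id_apply, map_add, hWfix y hy, ← ha, LinearMap.map_smul, hfuu]
  · -- f u = -u, so det f = -1, contradiction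
    have hnotmem : u ∉ W := by
      intro hmem
      exact huu ((Submodule.mem_orthogonal W u).mp huU u hmem)
    have hd : LinearIndependent ℝ (Fin.cons u c : Fin 3 → EuclideanSpace ℝ (Fin 3)) :=
      linearIndependent_fin_cons.mpr ⟨hc, by rw [← hW]; exact hnotmem⟩
    set b' := basisOfLinearIndependentOfCardEqFinrank hd
      (by rw [Fintype.card_fin, finrank_euclideanSpace_fin]) with hb'
    have hb'coe : ∀ j, b' j = (Fin.cons u c : Fin 3 → EuclideanSpace ℝ (Fin 3)) j := by
      intro j
      rw [hb', coe_basisOfLinearIndependentOfCardEqFinrank]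
    set dg : Fin 3 → ℝ := ![-1, 1, 1] with hdg
    have hfd : ∀ j, f (b' j) = dg j • b' j := by
      intro j
      rw [hb'coe]
      refine Fin.cases ?_ (fun i => ?_) j
      · rw [Fin.cons_zero, ← hc₀, h1]
        simp [hdg]
      · rw [Fin.cons_succ, hcfix i]
        fin_cases i <;> simp [hdg]
    have hmat : LinearMap.toMatrix b' b' f = Matrix.diagonal dg := by
      ext i j
      rw [LinearMap.toMatrix_apply, hfd j, _root_.map_smul, Module.Basis.repr_self,
        Matrix.diagonal_apply]
      simp only [Finsupp.smul_single, smul_eq_mul, mul_one, Finsupp.single_apply]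
      by_cases hij : i = j
      · subst hij; simp
      · simp [hij, Ne.symm hij]
    have : LinearMap.det f = -1 := by
      rw [← LinearMap.det_toMatrix b', hmat, Matrix.det_diagonal, Fin.prod_univ_three, hdg]
      norm_num
      rfl
    rw [hdet] at this
    norm_num at this

end StmtAux

/-- **Fixed points of a nontrivial isometric circle action on `S²`.**
If the circle group `S¹` acts on the unit sphere `S² ⊆ ℝ³` by isometries, with
continuous action map, and the action is nontrivial, then the fixed-point set has
exactly two elements. -/
theorem stmt5
    [MulAction Circle (Metric.sphere (0 : EuclideanSpace ℝ (Fin 3)) 1)]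
    (hiso : ∀ g : Circle,
      Isometry (fun x : Metric.sphere (0 : EuclideanSpace ℝ (Fin 3)) 1 => g • x))
    (hcont : Continuous
      (fun p : Circle × Metric.sphere (0 : EuclideanSpace ℝ (Fin 3)) 1 => p.1 • p.2))
    (hnontriv : ∃ (g : Circle) (x : Metric.sphere (0 : EuclideanSpace ℝ (Fin 3)) 1), g • x ≠ x) :
    ∃ a b : Metric.sphere (0 : EuclideanSpace ℝ (Fin 3)) 1, a ≠ b ∧
      {x : Metric.sphere (0 : EuclideanSpace ℝ (Fin 3)) 1 | ∀ g : Circle, g • x = x} = {a, b} := by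
  obtain ⟨g₀, x₀, hx₀⟩ := hnontriv
  have hne : fmap g₀ ≠ LinearMap.id := by
    intro h
    apply hx₀
    apply Subtype.ext
    rw [← fmap_sphere hiso g₀ x₀, h, LinearMap.id_apply]
  set F := LinearMap.ker (fmap g₀ - LinearMap.id) with hF
  have hdet0 : LinearMap.det (fmap g₀ - LinearMap.id) = 0 := by
    rw [fmap_det_sub_id hiso]
    exact det_sub_one_eq_zero (Mg_orth hiso g₀) (Mg_det hiso hcont g₀)
  have hFne : F ≠ ⊥ := (LinearMap.bot_lt_ker_of_det_eq_zero hdet0).ne'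
  obtain ⟨v₁, hv₁F, hv₁0⟩ := (Submodule.ne_bot_iff F).mp hFne
  set v₀ : EuclideanSpace ℝ (Fin 3) := (‖v₁‖⁻¹ : ℝ) • v₁ with hv₀def
  have hv₀norm : ‖v₀‖ = 1 := norm_smul_inv_norm hv₁0
  have hv₀0 : v₀ ≠ 0 := by
    intro h
    rw [h, norm_zero] at hv₀norm
    norm_num at hv₀norm
  have hv₀F : v₀ ∈ F := F.smul_mem _ hv₁F
  have hrank : Module.finrank ℝ F ≤ 1 :=
    fixed_rank_le_one (fmap_inner hiso g₀) (fmap_det hiso hcont g₀) hne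
  have hFspan : Submodule.span ℝ {v₀} = F := by
    apply Submodule.eq_of_le_of_finrank_le
    · rw [Submodule.span_le, Set.singleton_subset_iff]; exact hv₀F
    · rw [finrank_span_singleton hv₀0]; exact hrank
  have hvv : ⟪v₀, v₀⟫ = 1 := by
    rw [real_inner_self_eq_norm_sq, hv₀norm]; norm_num
  have hv0fix : ∀ g : Circle, fmap g v₀ = v₀ := by
    have hmemg : ∀ g : Circle, fmap g v₀ ∈ F := by
      intro g
      rw [mem_fix_iff]
      calc fmap g₀ (fmap g v₀) = fmap (g₀ * g) v₀ := by rw [fmap_mul hiso]; rfl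
      _ = fmap (g * g₀) v₀ := by rw [mul_comm]
      _ = fmap g (fmap g₀ v₀) := by rw [fmap_mul hiso]; rfl
      _ = fmap g v₀ := by rw [(mem_fix_iff _ _).mp hv₀F]
    set φ : Circle → ℝ := fun g => ⟪v₀, fmap g v₀⟫ with hφ
    have hcoef : ∀ g : Circle, fmap g v₀ = φ g • v₀ := by
      intro g
      obtain ⟨t, ht⟩ := Submodule.mem_span_singleton.mp (hFspan ▸ hmemg g)
      have : φ g = t := by
        rw [hφ]
        simp only
        rw [← ht, real_inner_smul_right, hvv, mul_one]
      rw [this, ht]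
    have hφcont : Continuous φ := by
      apply Continuous.inner continuous_const
      have : (fun g : Circle => fmap g v₀)
          = fun g : Circle => ∑ i, v₀ i • ((g • ee i : Sp3) : EuclideanSpace ℝ (Fin 3)) := by
        funext g; rw [fmap_apply]
      rw [this]
      apply continuous_finset_sum
      intro i _
      have h1 : Continuous fun g : Circle => (g • ee i : Sp3) :=
        hcont.comp (continuous_id.prodMk continuous_const)
      exact (continuous_subtype_val.comp h1).const_smul (v₀ i)
    have hφ1 : φ 1 = 1 := by
      rw [hφ]; simp only [fmap_one hiso, LinearMap.id_apply]; exact hvv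
    have hφpm : ∀ g, φ g = 1 ∨ φ g = -1 := by
      intro g
      have h := fmap_inner hiso g v₀ v₀
      rw [hcoef g, real_inner_smul_left, real_inner_smul_right, hvv, mul_one] at h
      exact mul_self_eq_one_iff.mp h
    intro g
    rw [hcoef g, aux_sign hφcont hφ1 hφpm g, one_smul]
  refine ⟨⟨v₀, mem_sphere_zero_iff_norm.mpr hv₀norm⟩,
    ⟨-v₀, by rw [mem_sphere_zero_iff_norm, norm_neg]; exact hv₀norm⟩, ?_, ?_⟩
  · intro h
    rw [Subtype.mk.injEq] at h
    apply hv₀0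
    have : v₀ + v₀ = 0 := by
      nth_rewrite 2 [h]
      simp
    have h2 : (2 : ℝ) • v₀ = 0 := by rw [two_smul]; exact this
    rcases smul_eq_zero.mp h2 with h3 | h3
    · norm_num at h3
    · exact h3
  · ext x
    simp only [Set.mem_setOf_eq, Set.mem_insert_iff, Set.mem_singleton_iff]
    constructor
    · intro hx
      have hxF : (x : EuclideanSpace ℝ (Fin 3)) ∈ F := by
        rw [mem_fix_iff, fmap_sphere hiso, hx g₀]
      obtain ⟨t, ht⟩ := Submodule.mem_span_singleton.mp (hFspan ▸ hxF)
      have hxn : ‖(x : EuclideanSpace ℝ (Fin 3))‖ = 1 := sp_norm x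
      rw [← ht, norm_smul, hv₀norm, mul_one, Real.norm_eq_abs] at hxn
      rcases (abs_eq zero_le_one).mp hxn with h1 | h1
      · left; apply Subtype.ext; rw [← ht, h1, one_smul]
      · right; apply Subtype.ext; rw [← ht, h1]; simp
    · intro hx g
      rcases hx with rfl | rfl
      · apply Subtype.ext
        rw [← fmap_sphere hiso]
        exact hv0fix g
      · apply Subtype.ext
        rw [← fmap_sphere hiso]
        show fmap g (-v₀) = -v₀
        rw [map_neg, hv0fix g]
end
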